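/- arXiv:1307.8006 — 3 statements merged into one kernel-verified Lean document; each statement's English description precedes it below -/
import Mathlib

section
/- The sl₂(ℂ)-module V(a)^{[μ]} is simple if and only if μ + a ∉ ℤ and μ - a ∉ ℤ. -/
/-!
The basis vectors `x^{μ+n}` are eigenvectors of `h` with the pairwise distinct eigenvalues
`2(μ+n)`, so every nonzero invariant subspace contains one of them. When no coefficient
`a+μ+n` of `e` and no coefficient `a-μ-n` of `f` vanishes, `e` and `f` carry that basis vector
to all the others, and the module is simple. Conversely, if `μ+a = k ∈ ℤ` then `e` kills
`x^{μ-k}`, so the span of the `x^{μ+n}` with `n ≤ -k` is a proper invariant subspace; if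
`μ-a = k ∈ ℤ` then `f` kills `x^{μ-k}` and the span of those with `n ≥ -k` is one.
-/

open Finsupp Submodule Set

section Supported

variable {R ι : Type*} [Semiring R]

theorem Finsupp.map_supported_le_of_apply_single {T : (ι →₀ R) →ₗ[R] (ι →₀ R)} {c : ι → R}
    {g : ι → ι} {s : Set ι} (hT : ∀ i, T (single i 1) = c i • single (g i) 1)
    (hs : ∀ i ∈ s, c i = 0 ∨ g i ∈ s) :
    (supported R R s).map T ≤ supported R R s := by
  rw [supported_eq_span_single, map_span, span_le]
  rintro _ ⟨_, ⟨i, hi, rfl⟩, rfl⟩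
  rw [SetLike.mem_coe, ← supported_eq_span_single, hT]
  rcases hs i hi with hc | hg
  · simp [hc]
  · exact smul_mem _ _ (single_mem_supported R 1 hg)

theorem Finsupp.map_supported_le_of_apply_single_eq_smul {T : (ι →₀ R) →ₗ[R] (ι →₀ R)}
    {c : ι → R} (hT : ∀ i, T (single i 1) = c i • single i 1) (s : Set ι) :
    (supported R R s).map T ≤ supported R R s :=
  map_supported_le_of_apply_single (g := id) hT fun _ hi => Or.inr hi

theorem Finsupp.supported_ne_bot [Nontrivial R] {s : Set ι} (hs : s.Nonempty) :
    supported R R s ≠ ⊥ :=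
  let ⟨i, hi⟩ := hs
  (Submodule.ne_bot_iff _).2 ⟨single i 1, single_mem_supported R 1 hi, single_ne_zero.2 one_ne_zero⟩

theorem Finsupp.supported_ne_top [Nontrivial R] {s : Set ι} {i : ι} (hi : i ∉ s) :
    supported R R s ≠ ⊤ := fun htop => by
  have : single i (1 : R) ∈ supported R R s := htop ▸ mem_top
  simpa using (mem_supported' R _).1 this i hi

end Supported

section IntShift

variable {R : Type*} [Semiring R] {T : (ℤ →₀ R) →ₗ[R] (ℤ →₀ R)} {c : ℤ → R}

theorem Finsupp.map_supported_Iic_le_of_raise (hT : ∀ n, T (single n 1) = c n • single (n + 1) 1)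
    {N : ℤ} (hN : c N = 0) : (supported R R (Iic N)).map T ≤ supported R R (Iic N) :=
  map_supported_le_of_apply_single hT fun n hn => by
    rcases (mem_Iic.1 hn).lt_or_eq with hlt | rfl
    · exact Or.inr (mem_Iic.2 hlt)
    · exact Or.inl hN

theorem Finsupp.map_supported_Iic_le_of_lower (hT : ∀ n, T (single n 1) = c n • single (n - 1) 1)
    (N : ℤ) : (supported R R (Iic N)).map T ≤ supported R R (Iic N) :=
  map_supported_le_of_apply_single hT fun n hn => Or.inr (mem_Iic.2 (by grind))

theorem Finsupp.map_supported_Ici_le_of_lower (hT : ∀ n, T (single n 1) = c n • single (n - 1) 1)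
    {N : ℤ} (hN : c N = 0) : (supported R R (Ici N)).map T ≤ supported R R (Ici N) :=
  map_supported_le_of_apply_single hT fun n hn => by
    rcases (mem_Ici.1 hn).lt_or_eq with hlt | rfl
    · exact Or.inr (mem_Ici.2 (Int.le_sub_one_of_lt hlt))
    · exact Or.inl hN

theorem Finsupp.map_supported_Ici_le_of_raise (hT : ∀ n, T (single n 1) = c n • single (n + 1) 1)
    (N : ℤ) : (supported R R (Ici N)).map T ≤ supported R R (Ici N) :=
  map_supported_le_of_apply_single hT fun n hn => Or.inr (mem_Ici.2 (by grind))

end IntShift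

section Diagonal

theorem Finsupp.apply_apply_of_apply_single_eq_smul {R ι : Type*} [CommSemiring R]
    {T : (ι →₀ R) →ₗ[R] (ι →₀ R)} {c : ι → R} (hT : ∀ i, T (single i 1) = c i • single i 1)
    (v : ι →₀ R) (j : ι) : T v j = c j * v j := by
  induction v using induction_linear with
  | zero => simp
  | add v w hv hw => simp [hv, hw, mul_add]
  | single i b =>
    rw [← smul_single_one, map_smul, hT]
    by_cases hij : i = j
    · subst hij; simp [mul_comm]
    · simp [hij]

variable {K ι : Type*} [Field K]

theorem Finsupp.exists_single_mem_of_apply_single_eq_smul {T : (ι →₀ K) →ₗ[K] (ι →₀ K)}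
    {c : ι → K} (hT : ∀ i, T (single i 1) = c i • single i 1) (hc : Function.Injective c)
    {p : Submodule K (ι →₀ K)} (hp : p.map T ≤ p) (hp0 : p ≠ ⊥) : ∃ i, single i 1 ∈ p := by
  classical
  obtain ⟨v, hv, hv0⟩ := (Submodule.ne_bot_iff p).1 hp0
  induction hn : v.support.card using Nat.strong_induction_on generalizing v with
  | _ n ih =>
  obtain ⟨i, hi⟩ := support_nonempty_iff.2 hv0
  -- `w` kills the `i`-th coordinate of `v` and rescales the others by nonzero factors.
  set w := T v - c i • v
  have hw : w ∈ p := sub_mem (hp (mem_map_of_mem hv)) (smul_mem p _ hv)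
  have hw_apply (j : ι) : w j = (c j - c i) * v j := by
    simp [w, apply_apply_of_apply_single_eq_smul hT, sub_mul]
  by_cases hw0 : w = 0
  · obtain ⟨b, rfl⟩ : ∃ b, v = single i b := by
      refine support_subset_singleton'.1 fun j hj => Finset.mem_singleton.2 ?_
      by_contra hji
      exact mul_ne_zero (sub_ne_zero.2 (hc.ne hji)) (mem_support_iff.1 hj)
        (by simp [← hw_apply, hw0])
    have hb : b ≠ 0 := by rintro rfl; exact hv0 (single_zero i)
    refine ⟨i, (p.smul_mem_iff hb).1 ?_⟩
    rwa [smul_single_one]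
  · have hsupp : w.support ⊆ v.support.erase i := fun j hj => by
      rw [mem_support_iff, hw_apply] at hj
      exact Finset.mem_erase.2 ⟨fun hji => hj (by rw [hji, sub_self, zero_mul]),
        mem_support_iff.2 (right_ne_zero_of_mul hj)⟩
    refine ih _ ?_ w hw hw0 rfl
    calc w.support.card ≤ (v.support.erase i).card := Finset.card_le_card hsupp
      _ < n := hn ▸ Finset.card_erase_lt_of_mem hi

end Diagonal

section Shift

variable {K : Type*} [Field K] {p : Submodule K (ℤ →₀ K)}

theorem Finsupp.single_mem_of_apply_single_eq_smul {T : (ℤ →₀ K) →ₗ[K] (ℤ →₀ K)} (hp : p.map T ≤ p)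
    {m n : ℤ} {c : K} (hT : T (single m 1) = c • single n 1) (hc : c ≠ 0)
    (hm : single m 1 ∈ p) : single n 1 ∈ p :=
  (p.smul_mem_iff hc).1 (hT ▸ hp (mem_map_of_mem hm))

theorem Finsupp.eq_top_of_single_mem {E F : (ℤ →₀ K) →ₗ[K] (ℤ →₀ K)} {c d : ℤ → K}
    (hE : ∀ n, E (single n 1) = c n • single (n + 1) 1)
    (hF : ∀ n, F (single n 1) = d n • single (n - 1) 1) (hc : ∀ n, c n ≠ 0) (hd : ∀ n, d n ≠ 0)
    (hpE : p.map E ≤ p) (hpF : p.map F ≤ p) {n : ℤ} (hn : single n 1 ∈ p) : p = ⊤ := by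
  have hall (m : ℤ) : single m 1 ∈ p := by
    induction m using Int.inductionOn' (b := n) with
    | zero => exact hn
    | succ k _ hk => exact single_mem_of_apply_single_eq_smul hpE (hE k) (hc k) hk
    | pred k _ hk => exact single_mem_of_apply_single_eq_smul hpF (hF k) (hd k) hk
  rw [eq_top_iff, ← Finsupp.basisSingleOne.span_eq, span_le, coe_basisSingleOne]
  exact range_subset_iff.2 hall

end Shift

/-- The sl₂(ℂ)-module `V(a)^{[μ]}` (with basis `{x^{μ+n} : n ∈ ℤ}`, modeled as
`ℤ →₀ ℂ`, the action being `e(x^s) = (a+s)x^{s+1}`, `f(x^s) = (a-s)x^{s-1}`,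
`h(x^s) = 2s·x^s` for `s = μ + n`) is simple — i.e. it is nonzero and has no
submodule invariant under `e, f, h` other than `⊥` and `⊤` — if and only if
`μ + a ∉ ℤ` and `μ - a ∉ ℤ`. -/
theorem stmt2 (a μ : ℂ)
    (e f h : (ℤ →₀ ℂ) →ₗ[ℂ] (ℤ →₀ ℂ))
    (he : ∀ n : ℤ, e (Finsupp.single n 1) = (a + μ + n) • Finsupp.single (n + 1) 1)
    (hf : ∀ n : ℤ, f (Finsupp.single n 1) = (a - μ - n) • Finsupp.single (n - 1) 1)
    (hh : ∀ n : ℤ, h (Finsupp.single n 1) = (2 * (μ + n)) • Finsupp.single n 1) :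
    ((∃ v : ℤ →₀ ℂ, v ≠ 0) ∧
      ∀ p : Submodule ℂ (ℤ →₀ ℂ),
        Submodule.map e p ≤ p → Submodule.map f p ≤ p → Submodule.map h p ≤ p →
        p = ⊥ ∨ p = ⊤)
    ↔ ((¬ ∃ n : ℤ, μ + a = (n : ℂ)) ∧ (¬ ∃ n : ℤ, μ - a = (n : ℂ))) := by
  constructor
  · rintro ⟨-, hsimple⟩
    constructor
    · rintro ⟨k, hk⟩
      rcases hsimple (supported ℂ ℂ (Iic (-k)))
        (map_supported_Iic_le_of_raise he (by push_cast; linear_combination hk))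
        (map_supported_Iic_le_of_lower hf _) (map_supported_le_of_apply_single_eq_smul hh _)
        with hbot | htop
      · exact supported_ne_bot nonempty_Iic hbot
      · exact supported_ne_top (i := -k + 1) (by simp) htop
    · rintro ⟨k, hk⟩
      rcases hsimple (supported ℂ ℂ (Ici (-k)))
        (map_supported_Ici_le_of_raise he _)
        (map_supported_Ici_le_of_lower hf (by push_cast; linear_combination -hk))
        (map_supported_le_of_apply_single_eq_smul hh _)
        with hbot | htop
      · exact supported_ne_bot nonempty_Ici hbot
      · exact supported_ne_top (i := -k - 1) (by simp) htop
  · rintro ⟨hplus, hminus⟩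
    have he_ne (n : ℤ) : a + μ + n ≠ 0 := fun h0 => hplus ⟨-n, by push_cast; linear_combination h0⟩
    have hf_ne (n : ℤ) : a - μ - n ≠ 0 := fun h0 => hminus ⟨-n, by push_cast; linear_combination -h0⟩
    have hh_inj : Function.Injective fun n : ℤ => 2 * (μ + n) := fun m n hmn => by
      exact_mod_cast (by linear_combination hmn / 2 : (m : ℂ) = n)
    refine ⟨⟨single 0 1, single_ne_zero.2 one_ne_zero⟩, fun p hpe hpf hph => ?_⟩
    refine or_iff_not_imp_left.2 fun hp => ?_
    obtain ⟨n, hn⟩ := exists_single_mem_of_apply_single_eq_smul hh hh_inj hph hp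
    exact eq_top_of_single_mem he hf he_ne hf_ne hpe hpf hn
end

section
/- Every simple weight module over sl₂(ℂ) has all weight spaces of dimension at most 1. -/
open Polynomial LinearMap

namespace Sl2Aux

variable {M : Type*} [AddCommGroup M] [Module ℂ M]
variable {E F H : M →ₗ[ℂ] M}

/-- Evaluation of polynomials in `F ∘ₗ E` at `v`, as a linear map. -/
noncomputable def polyEv (F E : M →ₗ[ℂ] M) (v : M) : ℂ[X] →ₗ[ℂ] M where
  toFun P := Polynomial.aeval (F ∘ₗ E) P v
  map_add' P Q := by simp
  map_smul' a P := by simp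

/-- The cyclic `ℂ[FE]`-submodule generated by `v`. -/
noncomputable def W (F E : M →ₗ[ℂ] M) (v : M) : Submodule ℂ M :=
  LinearMap.range (polyEv F E v)

@[simp] lemma polyEv_apply {v : M} (P : ℂ[X]) :
    polyEv F E v P = Polynomial.aeval (F ∘ₗ E) P v := rfl

lemma mem_W {v m : M} : m ∈ W F E v ↔ ∃ P : ℂ[X], Polynomial.aeval (F ∘ₗ E) P v = m :=
  Iff.rfl

section comm

variable (hHE : H ∘ₗ E - E ∘ₗ H = (2 : ℂ) • E)
variable (hHF : H ∘ₗ F - F ∘ₗ H = (-2 : ℂ) • F)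
variable (hEF : E ∘ₗ F - F ∘ₗ E = H)

include hHE in
lemma eigE {μ : ℂ} {m : M} (hm : H m = μ • m) : H (E m) = (μ + 2) • E m := by
  have h := LinearMap.congr_fun hHE m
  simp only [LinearMap.sub_apply, LinearMap.comp_apply, LinearMap.smul_apply] at h
  rw [hm] at h
  have : H (E m) = E (μ • m) + (2:ℂ) • E m := by linear_combination (norm := module) h
  rw [this, map_smul]
  module

include hHF in
lemma eigF {μ : ℂ} {m : M} (hm : H m = μ • m) : H (F m) = (μ - 2) • F m := by
  have h := LinearMap.congr_fun hHF m
  simp only [LinearMap.sub_apply, LinearMap.comp_apply, LinearMap.smul_apply] at h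
  rw [hm] at h
  have : H (F m) = F (μ • m) + (-2:ℂ) • F m := by linear_combination (norm := module) h
  rw [this, map_smul]
  module

include hHE hHF in
lemma eigT {μ : ℂ} {m : M} (hm : H m = μ • m) : H ((F ∘ₗ E) m) = μ • (F ∘ₗ E) m := by
  have h := eigF hHF (eigE hHE hm)
  simp only [LinearMap.comp_apply]
  rw [h]
  module

include hHE in
lemma eigEpow {μ : ℂ} {m : M} (hm : H m = μ • m) :
    ∀ b : ℕ, H ((E ^ b) m) = (μ + 2 * b) • (E ^ b) m := by
  intro b
  induction b with
  | zero => simpa using hm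
  | succ b ih =>
      have : (E ^ (b + 1)) m = E ((E ^ b) m) := by
        rw [pow_succ']; rfl
      rw [this, eigE hHE ih]
      push_cast
      ring_nf

include hHF in
lemma eigFpow {μ : ℂ} {m : M} (hm : H m = μ • m) :
    ∀ a : ℕ, H ((F ^ a) m) = (μ - 2 * a) • (F ^ a) m := by
  intro a
  induction a with
  | zero => simpa using hm
  | succ a ih =>
      have : (F ^ (a + 1)) m = F ((F ^ a) m) := by
        rw [pow_succ']; rfl
      rw [this, eigF hHF ih]
      push_cast
      ring_nf

include hHE hHF in
lemma eigTpow {μ : ℂ} {m : M} (hm : H m = μ • m) :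
    ∀ k : ℕ, H (((F ∘ₗ E) ^ k) m) = μ • ((F ∘ₗ E) ^ k) m := by
  intro k
  induction k with
  | zero => simpa using hm
  | succ k ih =>
      have : ((F ∘ₗ E) ^ (k + 1)) m = (F ∘ₗ E) (((F ∘ₗ E) ^ k) m) := by
        rw [pow_succ']; rfl
      rw [this, eigT hHE hHF ih]

include hHF hEF in
lemma straighten {μ : ℂ} {m : M} (hm : H m = μ • m) :
    ∀ a : ℕ, ∃ s : ℂ, E ((F ^ (a + 1)) m) = (F ^ (a + 1)) (E m) + s • (F ^ a) m := by
  have hEFel : ∀ x : M, E (F x) = F (E x) + H x := by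
    intro x
    have h := LinearMap.congr_fun hEF x
    simp only [LinearMap.sub_apply, LinearMap.comp_apply] at h
    linear_combination (norm := module) h
  intro a
  induction a with
  | zero =>
      refine ⟨μ, ?_⟩
      have h1 : (F ^ 1) m = F m := by simp
      have h2 : (F ^ 1) (E m) = F (E m) := by simp
      rw [h1, h2, hEFel m, hm]
      simp
  | succ a ih =>
      obtain ⟨s, hs⟩ := ih
      refine ⟨s + (μ - 2 * (a + 1)), ?_⟩
      have hp : ∀ x : M, (F ^ (a + 2)) x = F ((F ^ (a + 1)) x) := by
        intro x; rw [pow_succ']; rfl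
      have hp1 : ∀ x : M, (F ^ (a + 1)) x = F ((F ^ a) x) := by
        intro x; rw [pow_succ']; rfl
      have hHFa : H ((F ^ (a + 1)) m) = (μ - 2 * (a + 1)) • (F ^ (a + 1)) m := by
        have := eigFpow hHF hm (a + 1)
        push_cast at this ⊢
        exact this
      rw [hp m, hEFel ((F ^ (a+1)) m), hs, hHFa, map_add, map_smul, ← hp (E m), ← hp1 m]
      module

lemma Wshift {w : M} : W F E ((F ∘ₗ E) w) ≤ W F E w := by
  rintro x ⟨P, rfl⟩
  exact mem_W.2 ⟨P * X, by simp [map_mul, Module.End.mul_apply]⟩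

lemma Wpow {w : M} (k : ℕ) : W F E (((F ∘ₗ E) ^ k) w) ≤ W F E w := by
  rintro x ⟨P, rfl⟩
  exact mem_W.2 ⟨P * X ^ k, by simp [map_mul, map_pow, Module.End.mul_apply]⟩

include hHE hHF hEF in
lemma lemC : ∀ (k : ℕ) (c : ℂ) (w : M), H w = c • w →
    F (((F ∘ₗ E) ^ k) (E w)) ∈ W F E w := by
  intro k
  induction k with
  | zero =>
      intro c w hw
      refine mem_W.2 ⟨X, ?_⟩
      simp
  | succ k ih =>
      intro c w hw
      have hEw : H (E w) = (c + 2) • E w := eigE hHE hw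
      have hTE : (F ∘ₗ E) (E w) = E ((F ∘ₗ E) w) - (c + 2) • E w := by
        have h := LinearMap.congr_fun hEF (E w)
        simp only [LinearMap.sub_apply, LinearMap.comp_apply] at h
        rw [hEw] at h
        simp only [LinearMap.comp_apply]
        linear_combination (norm := module) -h
      have hsplit : ((F ∘ₗ E) ^ (k + 1)) (E w)
          = ((F ∘ₗ E) ^ k) (E ((F ∘ₗ E) w)) - (c + 2) • ((F ∘ₗ E) ^ k) (E w) := by
        have : ((F ∘ₗ E) ^ (k + 1)) (E w) = ((F ∘ₗ E) ^ k) ((F ∘ₗ E) (E w)) := by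
          rw [pow_succ]; rfl
        rw [this, hTE, map_sub, map_smul]
      rw [hsplit, map_sub, map_smul]
      refine sub_mem ?_ (Submodule.smul_mem _ _ (ih c w hw))
      exact Wshift (ih c ((F ∘ₗ E) w) (eigT hHE hHF hw))

include hHE hHF hEF in
lemma lemCW {c : ℂ} {w : M} (hw : H w = c • w) (P : ℂ[X]) :
    F (Polynomial.aeval (F ∘ₗ E) P (E w)) ∈ W F E w := by
  induction P using Polynomial.induction_on' with
  | add p q hp hq =>
      simp only [map_add, LinearMap.add_apply, LinearMap.map_add]
      exact add_mem hp hq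
  | monomial n a =>
      have : Polynomial.aeval (F ∘ₗ E) (monomial n a) (E w)
          = a • ((F ∘ₗ E) ^ n) (E w) := by
        simp [aeval_monomial, Module.End.mul_apply, Module.algebraMap_end_apply]
      rw [this, LinearMap.map_smul]
      exact Submodule.smul_mem _ _ (lemC hHE hHF hEF n c w hw)

include hHE hHF hEF in
lemma lemB : ∀ (a : ℕ) (c : ℂ) (w : M), H w = c • w →
    (F ^ a) ((E ^ a) w) ∈ W F E w := by
  intro a
  induction a with
  | zero =>
      intro c w hw
      exact mem_W.2 ⟨1, by simp⟩
  | succ a ih =>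
      intro c w hw
      have h1 : (E ^ (a + 1)) w = (E ^ a) (E w) := by rw [pow_succ]; rfl
      have h2 : (F ^ (a + 1)) ((E ^ a) (E w)) = F ((F ^ a) ((E ^ a) (E w))) := by
        rw [pow_succ']; rfl
      rw [h1, h2]
      obtain ⟨P, hP⟩ := mem_W.1 (ih (c + 2) (E w) (eigE hHE hw))
      rw [← hP]
      exact lemCW hHE hHF hEF hw P

include hHE hHF in
lemma eigW {c : ℂ} {v : M} (hv : H v = c • v) (P : ℂ[X]) :
    H (Polynomial.aeval (F ∘ₗ E) P v) = c • Polynomial.aeval (F ∘ₗ E) P v := by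
  induction P using Polynomial.induction_on' with
  | add p q hp hq =>
      simp only [map_add, LinearMap.add_apply, LinearMap.map_add, hp, hq, smul_add]
  | monomial n a =>
      have : Polynomial.aeval (F ∘ₗ E) (monomial n a) v
          = a • ((F ∘ₗ E) ^ n) v := by
        simp [aeval_monomial, Module.End.mul_apply, Module.algebraMap_end_apply]
      rw [this, LinearMap.map_smul, eigTpow hHE hHF hv n, smul_comm]

end comm

end Sl2Aux

/-- Every simple weight module over sl₂(ℂ) has all weight spaces of dimension at
most 1.  Here sl₂(ℂ) is presented by operators `E, F, H` on a ℂ-vector space `M`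
satisfying `[H,E] = 2E`, `[H,F] = -2F`, `[E,F] = H`; `M` is a weight module means
it is the sum of the eigenspaces of `H`; `M` is simple means it is nonzero and the
only submodules invariant under `E, F, H` are `⊥` and `⊤`.  The conclusion is that
each eigenspace (weight space) of `H` has dimension at most 1. -/
theorem stmt4 (M : Type*) [AddCommGroup M] [Module ℂ M]
    (E F H : M →ₗ[ℂ] M)
    (hHE : H ∘ₗ E - E ∘ₗ H = (2 : ℂ) • E)
    (hHF : H ∘ₗ F - F ∘ₗ H = (-2 : ℂ) • F)
    (hEF : E ∘ₗ F - F ∘ₗ E = H)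
    (hweight : (⨆ c : ℂ, Module.End.eigenspace H c) = ⊤)
    (hnonzero : ∃ m : M, m ≠ 0)
    (hsimple : ∀ p : Submodule ℂ M,
      Submodule.map E p ≤ p → Submodule.map F p ≤ p → Submodule.map H p ≤ p →
      p = ⊥ ∨ p = ⊤) :
    ∀ c : ℂ, Module.rank ℂ (Module.End.eigenspace H c) ≤ 1 := by
  classical
  intro c
  open Polynomial Sl2Aux Cardinal in
  by_cases hbot : Module.End.eigenspace H c = ⊥
  · rw [hbot]
    simp
  · -- A nonzero vector in the weight space
    obtain ⟨v, hvmem, hv0⟩ := (Submodule.ne_bot_iff _).1 hbot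
    have hv : H v = c • v := Module.End.mem_eigenspace_iff.1 hvmem
    -- KEY: every nonzero weight vector of weight c generates the whole weight space
    -- over ℂ[FE].
    have key : ∀ w : M, H w = c • w → w ≠ 0 →
        Module.End.eigenspace H c ≤ W F E w := by
      intro w hw hw0
      set S : Set M :=
        {m | ∃ a b k : ℕ, m = (F ^ a) ((E ^ b) (((F ∘ₗ E) ^ k) w))} with hS
      set p : Submodule ℂ M := Submodule.span ℂ S with hp
      have hwS : w ∈ S := ⟨0, 0, 0, by simp⟩
      -- weight of each generator
      have hgen_eig : ∀ a b k : ℕ,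
          H ((F ^ a) ((E ^ b) (((F ∘ₗ E) ^ k) w)))
            = (c + 2 * b - 2 * a) • (F ^ a) ((E ^ b) (((F ∘ₗ E) ^ k) w)) := by
        intro a b k
        exact eigFpow hHF (eigEpow hHE (eigTpow hHE hHF hw k) b) a
      -- invariance under E, F, H
      have hEinv : Submodule.map E p ≤ p := by
        rw [hp, Submodule.map_span_le]
        rintro m ⟨a, b, k, rfl⟩
        have hx : H ((E ^ b) (((F ∘ₗ E) ^ k) w))
            = (c + 2 * b) • (E ^ b) (((F ∘ₗ E) ^ k) w) :=
          eigEpow hHE (eigTpow hHE hHF hw k) b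
        have hEb : E ((E ^ b) (((F ∘ₗ E) ^ k) w))
            = (E ^ (b + 1)) (((F ∘ₗ E) ^ k) w) := by
          rw [pow_succ']; rfl
        cases a with
        | zero =>
            simp only [pow_zero, Module.End.one_apply]
            rw [hEb]
            exact Submodule.subset_span ⟨0, b + 1, k, by simp⟩
        | succ a =>
            obtain ⟨s, hs⟩ := straighten hHF hEF hx a
            rw [hs, hEb]
            exact add_mem (Submodule.subset_span ⟨a + 1, b + 1, k, rfl⟩)
              (Submodule.smul_mem _ _ (Submodule.subset_span ⟨a, b, k, rfl⟩))
      have hFinv : Submodule.map F p ≤ p := by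
        rw [hp, Submodule.map_span_le]
        rintro m ⟨a, b, k, rfl⟩
        have : F ((F ^ a) ((E ^ b) (((F ∘ₗ E) ^ k) w)))
            = (F ^ (a + 1)) ((E ^ b) (((F ∘ₗ E) ^ k) w)) := by
          rw [pow_succ']; rfl
        rw [this]
        exact Submodule.subset_span ⟨a + 1, b, k, rfl⟩
      have hHinv : Submodule.map H p ≤ p := by
        rw [hp, Submodule.map_span_le]
        rintro m ⟨a, b, k, rfl⟩
        rw [hgen_eig a b k]
        exact Submodule.smul_mem _ _ (Submodule.subset_span ⟨a, b, k, rfl⟩)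
      -- simplicity forces p = ⊤
      have hptop : p = ⊤ := by
        rcases hsimple p hEinv hFinv hHinv with h | h
        · exfalso
          have hwp : w ∈ p := Submodule.subset_span hwS
          rw [h, Submodule.mem_bot] at hwp
          exact hw0 hwp
        · exact h
      -- the "other weights" part
      set q : Submodule ℂ M :=
        W F E w ⊔ ⨆ μ, ⨆ _ : μ ≠ c, Module.End.eigenspace H μ with hq
      have hpq : p ≤ q := by
        rw [hp, Submodule.span_le]
        rintro m ⟨a, b, k, rfl⟩
        by_cases hab : a = b
        · subst hab
          have h1 : (F ^ a) ((E ^ a) (((F ∘ₗ E) ^ k) w)) ∈ W F E (((F ∘ₗ E) ^ k) w) :=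
            lemB hHE hHF hEF a c (((F ∘ₗ E) ^ k) w) (eigTpow hHE hHF hw k)
          exact le_sup_left (α := Submodule ℂ M) (Wpow k h1)
        · have hne : c + 2 * (b : ℂ) - 2 * a ≠ c := by
            intro hEq
            exact hab (Nat.cast_inj.1 (by linear_combination -hEq / 2 : (a : ℂ) = b))
          refine le_sup_right (α := Submodule ℂ M) ?_
          refine Submodule.mem_iSup_of_mem (c + 2 * (b : ℂ) - 2 * a) ?_
          refine Submodule.mem_iSup_of_mem hne ?_
          exact Module.End.mem_eigenspace_iff.2 (hgen_eig a b k)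
      have hqtop : q = ⊤ := top_unique (hptop ▸ hpq)
      -- now split any weight vector u and use independence of eigenspaces
      intro u hu
      have huq : u ∈ q := hqtop ▸ Submodule.mem_top
      rw [hq] at huq
      obtain ⟨x, hx, y, hy, rfl⟩ := Submodule.mem_sup.1 huq
      obtain ⟨P, hP⟩ := mem_W.1 hx
      have hxc : x ∈ Module.End.eigenspace H c :=
        Module.End.mem_eigenspace_iff.2 (hP ▸ eigW hHE hHF hw P)
      have hyc : y ∈ Module.End.eigenspace H c := by
        have : y = x + y - x := by abel
        rw [this]
        exact sub_mem hu hxc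
      have hy0 : y = 0 :=
        Submodule.disjoint_def.1 (Module.End.eigenspaces_iSupIndep H c) y hyc hy
      rw [hy0, add_zero]
      exact hx
    -- produce an eigenvector of FE inside the weight space
    have hex : ∃ n : ℕ, ∃ P : ℂ[X],
        P ≠ 0 ∧ Polynomial.aeval (F ∘ₗ E) P v = 0 ∧ P.natDegree = n := by
      by_cases hTv : (F ∘ₗ E) v = 0
      · exact ⟨1, X, X_ne_zero, by simpa using hTv, natDegree_X⟩
      · have hvW : v ∈ W F E ((F ∘ₗ E) v) :=
          key _ (eigT hHE hHF hv) hTv hvmem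
        obtain ⟨Q, hQ⟩ := mem_W.1 hvW
        refine ⟨(Q * X - 1).natDegree, Q * X - 1, ?_, ?_, rfl⟩
        · intro h0
          have := congrArg (Polynomial.eval 0) h0
          simp at this
        · have : Polynomial.aeval (F ∘ₗ E) (Q * X) v = v := by
            rw [map_mul]
            simpa [Module.End.mul_apply] using hQ
          rw [map_sub, LinearMap.sub_apply, this, map_one, Module.End.one_apply, sub_self]
    set n := Nat.find hex with hn
    obtain ⟨P, hP0, hPv, hPd⟩ := Nat.find_spec hex
    have hdeg1 : 0 < P.natDegree := by
      rcases Nat.eq_zero_or_pos P.natDegree with h0 | h1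
      · obtain ⟨a, rfl⟩ := Polynomial.natDegree_eq_zero.1 h0
        have ha : a ≠ 0 := fun h => hP0 (by rw [h, map_zero])
        have : a • v = 0 := by simpa [Algebra.algebraMap_eq_smul_one] using hPv
        exact absurd (by simpa [ha] using (smul_eq_zero.1 this)) hv0
      · exact h1
    obtain ⟨lam, hroot⟩ := Complex.exists_root (Polynomial.natDegree_pos_iff_degree_pos.1 hdeg1)
    obtain ⟨Q, hPQ⟩ := Polynomial.dvd_iff_isRoot.2 hroot
    have hQ0 : Q ≠ 0 := by
      rintro rfl
      rw [mul_zero] at hPQ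
      exact hP0 hPQ
    have hQdeg : Q.natDegree < n := by
      have : P.natDegree = 1 + Q.natDegree := by
        rw [hPQ, Polynomial.natDegree_mul (Polynomial.X_sub_C_ne_zero lam) hQ0,
          Polynomial.natDegree_X_sub_C]
      omega
    set w := Polynomial.aeval (F ∘ₗ E) Q v with hwdef
    have hw0 : w ≠ 0 := by
      intro h
      exact Nat.find_min hex hQdeg ⟨Q, hQ0, h, rfl⟩
    have hwc : H w = c • w := eigW hHE hHF hv Q
    have hTw : (F ∘ₗ E) w = lam • w := by
      have h1 : Polynomial.aeval (F ∘ₗ E) P v = (F ∘ₗ E) w - lam • w := by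
        rw [hPQ, map_mul, Module.End.mul_apply, ← hwdef, map_sub, Polynomial.aeval_X,
          aeval_C, LinearMap.sub_apply, Module.algebraMap_end_apply]
      rw [hPv] at h1
      exact sub_eq_zero.1 h1.symm
    -- every element of W F E w is a multiple of w
    have hWw : W F E w ≤ Submodule.span ℂ {w} := by
      have hpow : ∀ m : ℕ, ((F ∘ₗ E) ^ m) w = lam ^ m • w := by
        intro m
        induction m with
        | zero => simp
        | succ m ih =>
            have : ((F ∘ₗ E) ^ (m + 1)) w = (F ∘ₗ E) (((F ∘ₗ E) ^ m) w) := by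
              rw [pow_succ']; rfl
            rw [this, ih, LinearMap.map_smul, hTw, smul_smul, ← pow_succ]
      rintro x ⟨P', rfl⟩
      simp only [polyEv_apply]
      induction P' using Polynomial.induction_on' with
      | add p q hp hq =>
          simp only [map_add, LinearMap.add_apply]
          exact add_mem hp hq
      | monomial m a =>
          have : Polynomial.aeval (F ∘ₗ E) (Polynomial.monomial m a) w
              = (a * lam ^ m) • w := by
            simp [aeval_monomial, Module.End.mul_apply, Module.algebraMap_end_apply,
              hpow m, smul_smul, mul_comm]
          rw [this]
          exact Submodule.smul_mem _ _ (Submodule.mem_span_singleton_self w)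
    calc Module.rank ℂ (Module.End.eigenspace H c)
        ≤ Module.rank ℂ (Submodule.span ℂ ({w} : Set M)) :=
          Submodule.rank_mono ((key w hwc hw0).trans hWw)
      _ ≤ #({w} : Set M) := rank_span_le ({w} : Set M)
      _ = 1 := Cardinal.mk_singleton w
end

section
/- In the formal power series ring ℤ[[x,y,z]], the coefficient of x^{m₁}y^{m₂}z^{m₃} in 1/((1-xy)(1-xz)(1-yz)) equals 1 if m₁ + m₂ + m₃ is even and m₁ ≤ m₂ + m₃, m₂ ≤ m₁ + m₃, m₃ ≤ m₁ + m₂; and equals 0 otherwise. -/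
/-!
Multiplying by `1 - xᵉ` turns a power series `φ` into `φ - xᵉ φ`, whose coefficient at `n` is
`φₙ - φₙ₋ₑ`. Peeling the three factors off one at a time, the indicator series of the even
triangles is sent by `1 - yz` to the indicator of `m₁ = m₂ + m₃`, then by `1 - xz` to the
indicator of `m₁ = m₂, m₃ = 0`, and finally by `1 - xy` to `1`. Since `G` is the inverse of the
product, it is this indicator series.
-/

open MvPowerSeries

namespace MvPowerSeries

variable {σ R : Type*}

theorem coeff_one_sub_monomial_mul [CommRing R] (e n : σ →₀ ℕ) (φ : MvPowerSeries σ R) :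
    coeff n ((1 - monomial e 1) * φ) = coeff n φ - if e ≤ n then coeff (n - e) φ else 0 := by
  simp only [sub_mul, one_mul, map_sub, coeff_monomial_mul]

theorem X_mul_X_eq_monomial [CommSemiring R] (i j : σ) :
    (X i * X j : MvPowerSeries σ R) = monomial (Finsupp.single i 1 + Finsupp.single j 1) 1 := by
  rw [X_def, X_def, monomial_mul_monomial, one_mul]

def indicatorSeries [Semiring R] (p : (σ →₀ ℕ) → Prop) [DecidablePred p] : MvPowerSeries σ R :=
  fun n => if p n then 1 else 0

@[simp]
theorem coeff_indicatorSeries [Semiring R] (p : (σ →₀ ℕ) → Prop) [DecidablePred p]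
    (n : σ →₀ ℕ) : coeff n (indicatorSeries p : MvPowerSeries σ R) = if p n then 1 else 0 :=
  coeff_apply _ n

end MvPowerSeries

def IsEvenTriangle (n : Fin 3 →₀ ℕ) : Prop :=
  Even (n 0 + n 1 + n 2) ∧ n 0 ≤ n 1 + n 2 ∧ n 1 ≤ n 0 + n 2 ∧ n 2 ≤ n 0 + n 1

instance : DecidablePred IsEvenTriangle := fun _ =>
  inferInstanceAs (Decidable (_ ∧ _))

theorem one_sub_X_mul_X_mul_indicatorSeries_isEvenTriangle :
    (1 - X 1 * X 2) * (indicatorSeries IsEvenTriangle : MvPowerSeries (Fin 3) ℤ) =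
      indicatorSeries fun n => n 0 = n 1 + n 2 := by
  ext n
  rw [X_mul_X_eq_monomial, coeff_one_sub_monomial_mul]
  simp only [coeff_indicatorSeries, IsEvenTriangle, Nat.even_iff, Finsupp.le_def,
    Fin.forall_fin_succ, Fin.succ_zero_eq_one, Fin.succ_one_eq_two, IsEmpty.forall_iff, and_true,
    Finsupp.coe_tsub, Finsupp.coe_add, Pi.add_apply, Pi.sub_apply, Finsupp.single_apply]
  split_ifs <;> omega

theorem one_sub_X_mul_X_mul_indicatorSeries_eq_add :
    (1 - X 0 * X 2) * (indicatorSeries fun n => n 0 = n 1 + n 2 : MvPowerSeries (Fin 3) ℤ) =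
      indicatorSeries fun n => n 0 = n 1 ∧ n 2 = 0 := by
  ext n
  rw [X_mul_X_eq_monomial, coeff_one_sub_monomial_mul]
  simp only [coeff_indicatorSeries, Finsupp.le_def,
    Fin.forall_fin_succ, Fin.succ_zero_eq_one, Fin.succ_one_eq_two, IsEmpty.forall_iff, and_true,
    Finsupp.coe_tsub, Finsupp.coe_add, Pi.add_apply, Pi.sub_apply, Finsupp.single_apply]
  split_ifs <;> omega

theorem one_sub_X_mul_X_mul_indicatorSeries_eq :
    (1 - X 0 * X 1) * (indicatorSeries fun n => n 0 = n 1 ∧ n 2 = 0 : MvPowerSeries (Fin 3) ℤ) =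
      1 := by
  ext n
  rw [X_mul_X_eq_monomial, coeff_one_sub_monomial_mul, coeff_one]
  simp only [coeff_indicatorSeries, Finsupp.le_def, Finsupp.ext_iff,
    Fin.forall_fin_succ, Fin.succ_zero_eq_one, Fin.succ_one_eq_two, IsEmpty.forall_iff, and_true,
    Finsupp.coe_tsub, Finsupp.coe_add, Finsupp.coe_zero, Pi.add_apply, Pi.sub_apply, Pi.zero_apply,
    Finsupp.single_apply]
  split_ifs <;> omega

/-- In `ℤ[[x,y,z]]`, the coefficient of `x^{m₁}y^{m₂}z^{m₃}` in
`1/((1-xy)(1-xz)(1-yz))` equals 1 if `m₁+m₂+m₃` is even and the triangle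
inequalities `m₁ ≤ m₂+m₃`, `m₂ ≤ m₁+m₃`, `m₃ ≤ m₁+m₂` hold, and 0 otherwise. -/
theorem stmt18
    (x y z : MvPowerSeries (Fin 3) ℤ)
    (hx : x = MvPowerSeries.X 0) (hy : y = MvPowerSeries.X 1) (hz : z = MvPowerSeries.X 2)
    (G : MvPowerSeries (Fin 3) ℤ)
    (hG : (1 - x * y) * (1 - x * z) * (1 - y * z) * G = 1) :
    ∀ m₁ m₂ m₃ : ℕ,
      MvPowerSeries.coeff (R := ℤ)
          (Finsupp.single 0 m₁ + Finsupp.single 1 m₂ + Finsupp.single 2 m₃) G =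
        if Even (m₁ + m₂ + m₃) ∧ m₁ ≤ m₂ + m₃ ∧ m₂ ≤ m₁ + m₃ ∧ m₃ ≤ m₁ + m₂
        then 1 else 0 := by
  subst hx hy hz
  have hInv : (1 - X 0 * X 1) * (1 - X 0 * X 2) * (1 - X 1 * X 2) *
      (indicatorSeries IsEvenTriangle : MvPowerSeries (Fin 3) ℤ) = 1 := by
    rw [mul_assoc, one_sub_X_mul_X_mul_indicatorSeries_isEvenTriangle, mul_assoc,
      one_sub_X_mul_X_mul_indicatorSeries_eq_add, one_sub_X_mul_X_mul_indicatorSeries_eq]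
  obtain rfl : G = indicatorSeries IsEvenTriangle :=
    left_inv_eq_right_inv (by rw [mul_comm, hG]) hInv
  intro m₁ m₂ m₃
  simp [IsEvenTriangle]
end
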